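/- Let Â be a Courant extension of a transitive Lie algebroid A and ∇ a connection on A. Let E_∇ ⊂ Â be the preimage of ∇(T_X) and E_∇^⊥ its annihilator under the symmetric pairing. Then: (1) E_∇ ∩ E_∇^⊥ = 0; (2) the projection Â → A restricts to an isomorphism E_∇^⊥ → g; (3) g(Â) decomposes as the orthogonal direct sum Ω¹_X ⊕ E_∇^⊥; and (4) if ∇ is flat, then E_∇ is closed under the Leibniz bracket and the restricted structure makes E_∇ an exact Courant algebroid. -/

import Mathlib

noncomputable section

/-- The "vector fields" on the algebraic model of the space with function ring `O`. -/
abbrev Vec (O : Type*) [CommRing O] [Algebra ℂ O] := Derivation ℂ O O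

/-- Algebraic model of a Courant `O`-algebroid: an `O`-module `Q` equipped with a
Leibniz bracket, an `O`-linear anchor into vector fields, a symmetric `O`-bilinear
pairing, and a derivation `∂ : O → Q`, subject to the Courant axioms. -/
structure CourantAlgebroid (O : Type*) [CommRing O] [Algebra ℂ O]
    (Q : Type*) [AddCommGroup Q] [Module O Q] where
  bracket : Q → Q → Q
  bracket_add_left : ∀ q₁ q₂ q₃, bracket (q₁ + q₂) q₃ = bracket q₁ q₃ + bracket q₂ q₃
  bracket_add_right : ∀ q₁ q₂ q₃, bracket q₁ (q₂ + q₃) = bracket q₁ q₂ + bracket q₁ q₃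
  anchor : Q →ₗ[O] Vec O
  pair : Q →ₗ[O] Q →ₗ[O] O
  pair_symm : ∀ q₁ q₂, pair q₁ q₂ = pair q₂ q₁
  par : O → Q
  par_add : ∀ f g, par (f + g) = par f + par g
  par_mul : ∀ f g, par (f * g) = f • par g + g • par f
  anchor_par : ∀ f, anchor (par f) = 0
  anchor_bracket : ∀ q₁ q₂, anchor (bracket q₁ q₂) = ⁅anchor q₁, anchor q₂⁆
  jacobi : ∀ q q₁ q₂, bracket q (bracket q₁ q₂)
      = bracket (bracket q q₁) q₂ + bracket q₁ (bracket q q₂)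
  leibniz : ∀ (q₁ q₂ : Q) (f : O), bracket q₁ (f • q₂) = f • bracket q₁ q₂ + anchor q₁ f • q₂
  invar : ∀ q q₁ q₂, pair (bracket q q₁) q₂ + pair q₁ (bracket q q₂)
      = anchor q (pair q₁ q₂)
  bracket_par : ∀ (q : Q) (f : O), bracket q (par f) = par (anchor q f)
  pair_par : ∀ (q : Q) (f : O), pair q (par f) = anchor q f
  symm_bracket : ∀ q₁ q₂, bracket q₁ q₂ + bracket q₂ q₁ = par (pair q₁ q₂)

/-- `Ω_Q`: the `O`-submodule of `Q` generated by the image of the derivation `∂`. -/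
def CourantAlgebroid.Omega {O : Type*} [CommRing O] [Algebra ℂ O]
    {Q : Type*} [AddCommGroup Q] [Module O Q] (C : CourantAlgebroid O Q) : Submodule O Q :=
  Submodule.span O (Set.range C.par)

/-- Algebraic model of a Lie `O`-algebroid. -/
structure LieAlgebroid (O : Type*) [CommRing O] [Algebra ℂ O]
    (A : Type*) [AddCommGroup A] [Module O A] where
  bracket : A → A → A
  bracket_add_left : ∀ a b c, bracket (a + b) c = bracket a c + bracket b c
  bracket_add_right : ∀ a b c, bracket a (b + c) = bracket a b + bracket a c
  anchor : A →ₗ[O] Vec O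
  skew : ∀ a b, bracket a b = - bracket b a
  jacobi : ∀ a b c, bracket a (bracket b c) = bracket (bracket a b) c + bracket b (bracket a c)
  anchor_bracket : ∀ a b, anchor (bracket a b) = ⁅anchor a, anchor b⁆
  leibniz : ∀ (a b : A) (f : O), bracket a (f • b) = f • bracket a b + anchor a f • b

/-- A Courant extension of a Lie algebroid `A`: a Courant algebroid `Q` together
with a surjective projection onto `A` whose kernel is `Ω_Q`, compatible with
brackets and anchors (an identification `Q̄ ≅ A`). -/
structure CourantExtension {O : Type*} [CommRing O] [Algebra ℂ O]
    {Q : Type*} [AddCommGroup Q] [Module O Q]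
    {A : Type*} [AddCommGroup A] [Module O A]
    (C : CourantAlgebroid O Q) (L : LieAlgebroid O A) where
  p : Q →ₗ[O] A
  surj : Function.Surjective p
  ker_eq : LinearMap.ker p = C.Omega
  map_bracket : ∀ q₁ q₂, p (C.bracket q₁ q₂) = L.bracket (p q₁) (p q₂)
  map_anchor : ∀ q, L.anchor (p q) = C.anchor q

/-- Evaluation of vector fields at `f`, as an `O`-linear one-form `df`. -/
def evalForm (O : Type*) [CommRing O] [Algebra ℂ O] (f : O) : Vec O →ₗ[O] O where
  toFun ξ := ξ f
  map_add' ξ η := by simp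
  map_smul' g ξ := by simp

/-- let `Â` (here `Q`) be a Courant extension of a transitive Lie
algebroid `A` and `nb` a connection on `A`.  Let `E = E_nb ⊆ Q` be the preimage
of `nb(T)` under the projection and `E^⊥` its annihilator for the pairing.
Then: (1) `E ∩ E^⊥ = 0`; (2) the projection restricts to an isomorphism
`E^⊥ → g = ker π_A`; (3) `g(Â) = ker π_Q` decomposes as the orthogonal direct
sum `Ω¹ ⊕ E^⊥`; (4) if `nb` is flat then `E` is closed under the Leibniz
bracket and becomes an exact Courant algebroid (its anchor is surjective with
kernel `Ω¹`). -/
theorem courant_extension_connection_decomposition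
    (O : Type*) [CommRing O] [Algebra ℂ O]
    (Q : Type*) [AddCommGroup Q] [Module O Q]
    (A : Type*) [AddCommGroup A] [Module O A]
    (C : CourantAlgebroid O Q) (L : LieAlgebroid O A)
    (E : CourantExtension C L)
    (hsurj : Function.Surjective L.anchor)
    (i : (Vec O →ₗ[O] O) → Q)
    (hi_add : ∀ α β, i (α + β) = i α + i β)
    (hi_smul : ∀ (f : O) α, i (f • α) = f • i α)
    (hi_par : ∀ f : O, C.par f = i (evalForm O f))
    (hi_pair : ∀ (q : Q) α, C.pair q (i α) = α (C.anchor q))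
    (hi_inj : Function.Injective i)
    (hOmega : ∀ w ∈ C.Omega, ∃ α, w = i α)
    (hmem : ∀ α, i α ∈ C.Omega)
    (nb : Vec O →ₗ[O] A)
    (hconn : ∀ ξ, L.anchor (nb ξ) = ξ) :
    -- `Env` is the preimage of `nb(T)`, `Perp` its annihilator:
    (let Env : Set Q := {q | ∃ ξ, E.p q = nb ξ}
     let Perp : Set Q := {q | ∀ e ∈ Env, C.pair q e = 0}
     -- (1)
     (∀ q ∈ Env, q ∈ Perp → q = 0)
     -- (2)
     ∧ (∀ q ∈ Perp, L.anchor (E.p q) = 0)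
     ∧ (∀ q ∈ Perp, ∀ q' ∈ Perp, E.p q = E.p q' → q = q')
     ∧ (∀ b : A, L.anchor b = 0 → ∃ q ∈ Perp, E.p q = b)
     -- (3)
     ∧ (∀ w ∈ C.Omega, ∀ e ∈ Perp, C.pair w e = 0)
     ∧ (∀ k : Q, C.anchor k = 0 →
          ∃! z : Q × Q, z.1 ∈ C.Omega ∧ z.2 ∈ Perp ∧ k = z.1 + z.2)
     -- (4)
     ∧ ((∀ ξ η, nb ⁅ξ, η⁆ = L.bracket (nb ξ) (nb η)) →
          (∀ q₁ ∈ Env, ∀ q₂ ∈ Env, C.bracket q₁ q₂ ∈ Env)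
          ∧ (∀ ξ : Vec O, ∃ q ∈ Env, C.anchor q = ξ)
          ∧ (∀ q ∈ Env, C.anchor q = 0 → q ∈ C.Omega))) := by
  intro Env Perp
  have hker : ∀ x : Q, E.p x = 0 ↔ x ∈ C.Omega := by
    intro x; rw [← E.ker_eq]; exact Iff.rfl
  have hpa : ∀ q : Q, C.anchor q = L.anchor (E.p q) := fun q => (E.map_anchor q).symm
  have hi_env : ∀ α, i α ∈ Env := by
    intro α
    refine ⟨0, ?_⟩
    rw [map_zero]
    exact (hker _).mpr (hmem α)
  have hi0 : i 0 = (0 : Q) := by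
    have h := hi_smul 0 0
    simpa using h
  have hPerpAnchor : ∀ q ∈ Perp, C.anchor q = 0 := by
    intro q hq
    ext f
    have h := hq (i (evalForm O f)) (hi_env _)
    rw [hi_pair] at h
    simpa [evalForm] using h
  have hpair0 : ∀ q : Q, C.anchor q = 0 → ∀ α, C.pair q (i α) = 0 := by
    intro q hq α; rw [hi_pair, hq, map_zero]
  have h1 : ∀ q ∈ Env, q ∈ Perp → q = 0 := by
    intro q hE hP
    obtain ⟨ξ, hξ⟩ := hE
    have ha : C.anchor q = 0 := hPerpAnchor q hP
    have hξ0 : ξ = 0 := by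
      have h := hconn ξ
      rw [← hξ, ← hpa, ha] at h
      exact h.symm
    have hp0 : E.p q = 0 := by rw [hξ, hξ0, map_zero]
    obtain ⟨α, rfl⟩ := hOmega q ((hker q).mp hp0)
    have hα : α = 0 := by
      ext ζ
      obtain ⟨q', hq'⟩ := E.surj (nb ζ)
      have h := hP q' ⟨ζ, hq'⟩
      rw [C.pair_symm, hi_pair] at h
      have haq' : C.anchor q' = ζ := by rw [hpa, hq', hconn]
      rw [haq'] at h
      simpa using h
    rw [hα, hi0]
  have h2a : ∀ q ∈ Perp, L.anchor (E.p q) = 0 := by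
    intro q hq; rw [← hpa]; exact hPerpAnchor q hq
  have hPerpSub : ∀ q ∈ Perp, ∀ q' ∈ Perp, q - q' ∈ Perp := by
    intro q hq q' hq' e he
    rw [map_sub, LinearMap.sub_apply, hq e he, hq' e he, sub_zero]
  have h2b : ∀ q ∈ Perp, ∀ q' ∈ Perp, E.p q = E.p q' → q = q' := by
    intro q hq q' hq' hpp
    have hd : q - q' ∈ Perp := hPerpSub q hq q' hq'
    have hdE : q - q' ∈ Env := ⟨0, by rw [map_zero, map_sub, hpp, sub_self]⟩
    exact sub_eq_zero.mp (h1 _ hdE hd)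
  have h2c : ∀ b : A, L.anchor b = 0 → ∃ q ∈ Perp, E.p q = b := by
    intro b hb
    obtain ⟨q0, hq0⟩ := E.surj b
    have ha0 : C.anchor q0 = 0 := by rw [hpa, hq0, hb]
    have hwd : ∀ x y : Q, E.p x = E.p y → C.pair q0 x = C.pair q0 y := by
      intro x y hxy
      have hxy0 : E.p (x - y) = 0 := by rw [map_sub, hxy, sub_self]
      obtain ⟨β, hβ⟩ := hOmega _ ((hker _).mp hxy0)
      have h : C.pair q0 (x - y) = 0 := by rw [hβ]; exact hpair0 q0 ha0 β
      rw [map_sub] at h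
      exact sub_eq_zero.mp h
    have hliftp : ∀ ξ : Vec O, E.p (E.surj (nb ξ)).choose = nb ξ :=
      fun ξ => (E.surj (nb ξ)).choose_spec
    set α : Vec O →ₗ[O] O :=
      { toFun := fun ξ => C.pair q0 (E.surj (nb ξ)).choose
        map_add' := by
          intro ξ η
          have h1 : E.p (E.surj (nb (ξ + η))).choose
              = E.p ((E.surj (nb ξ)).choose + (E.surj (nb η)).choose) := by
            rw [hliftp, map_add, map_add, hliftp, hliftp]
          rw [hwd _ _ h1, map_add]
        map_smul' := by
          intro f ξ
          have h1 : E.p (E.surj (nb (f • ξ))).choose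
              = E.p (f • (E.surj (nb ξ)).choose) := by
            rw [hliftp, map_smul, map_smul, hliftp]
          rw [hwd _ _ h1, map_smul]
          rfl } with hαdef
    refine ⟨q0 - i α, ?_, ?_⟩
    · intro e he
      obtain ⟨ξ, hξ⟩ := he
      have hae : C.anchor e = ξ := by rw [hpa, hξ, hconn]
      have he1 : C.pair (i α) e = C.pair q0 e := by
        rw [C.pair_symm, hi_pair, hae]
        exact (hwd _ _ (by rw [hξ, hliftp])).symm
      rw [map_sub, LinearMap.sub_apply, he1, sub_self]
    · have hiα : E.p (i α) = 0 := (hker _).mpr (hmem α)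
      rw [map_sub, hq0, hiα, sub_zero]
  have h3a : ∀ w ∈ C.Omega, ∀ e ∈ Perp, C.pair w e = 0 := by
    intro w hw e he
    obtain ⟨β, rfl⟩ := hOmega w hw
    rw [C.pair_symm]
    exact hpair0 e (hPerpAnchor e he) β
  have hOP : ∀ x ∈ C.Omega, x ∈ Perp → x = 0 := by
    intro x hx hxP
    obtain ⟨β, rfl⟩ := hOmega x hx
    exact h1 _ (hi_env β) hxP
  have h3b : ∀ k : Q, C.anchor k = 0 →
      ∃! z : Q × Q, z.1 ∈ C.Omega ∧ z.2 ∈ Perp ∧ k = z.1 + z.2 := by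
    intro k hk
    have hbk : L.anchor (E.p k) = 0 := by rw [← hpa, hk]
    obtain ⟨q, hqP, hqp⟩ := h2c (E.p k) hbk
    have hkq : k - q ∈ C.Omega := (hker _).mp (by rw [map_sub, hqp, sub_self])
    refine ⟨(k - q, q), ⟨hkq, hqP, by simp⟩, ?_⟩
    rintro ⟨w, e⟩ ⟨hw, he, hke⟩
    have hqe : q - e ∈ C.Omega := by
      have hrw : q - e = w - (k - q) := by
        have : k = w + e := hke
        rw [this]; abel
      rw [hrw]
      exact Submodule.sub_mem _ hw hkq
    have hqe0 : q = e := sub_eq_zero.mp (hOP _ hqe (hPerpSub q hqP e he))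
    have hwe : w = k - q := by
      have : k = w + e := hke
      rw [this, hqe0]; abel
    simp [hwe, hqe0]
  refine ⟨h1, h2a, h2b, h2c, h3a, h3b, ?_⟩
  intro hflat
  refine ⟨?_, ?_, ?_⟩
  · intro q₁ h₁ q₂ h₂
    obtain ⟨ξ₁, hξ₁⟩ := h₁; obtain ⟨ξ₂, hξ₂⟩ := h₂
    exact ⟨⁅ξ₁, ξ₂⁆, by rw [E.map_bracket, hξ₁, hξ₂, hflat]⟩
  · intro ξ
    obtain ⟨q, hq⟩ := E.surj (nb ξ)
    exact ⟨q, ⟨ξ, hq⟩, by rw [hpa, hq, hconn]⟩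
  · intro q hq h0
    obtain ⟨ξ, hξ⟩ := hq
    have hξ0 : ξ = 0 := by
      have h := hconn ξ
      rw [← hξ, ← hpa, h0] at h
      exact h.symm
    have : E.p q = 0 := by rw [hξ, hξ0, map_zero]
    exact (hker q).mp this
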